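/- Let T be a C² solution of ρCₚ u·∇T − kΔT = 0 in Ω with divergence-free u vanishing on ∂Ω, satisfying Robin conditions −k∂T/∂n = h_i(T − c_i) on boundary pieces Γ_i with h_i > 0. Then min_i c_i ≤ T ≤ max_i c_i in Ω. -/

import Mathlib

open MeasureTheory Real Set

/-- Partial derivative in direction `i`. -/
noncomputable def pd (f : (Fin 3 → ℝ) → ℝ) (i : Fin 3) (x : Fin 3 → ℝ) : ℝ :=
  fderiv ℝ f x (Pi.single i 1)

/-- Divergence of a vector field on `ℝ³`. -/
noncomputable def vdiv (u : (Fin 3 → ℝ) → (Fin 3 → ℝ)) (x : Fin 3 → ℝ) : ℝ :=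
  ∑ i, pd (fun y => u y i) i x

/-- Laplacian of a scalar field on `ℝ³`. -/
noncomputable def lap (f : (Fin 3 → ℝ) → ℝ) (x : Fin 3 → ℝ) : ℝ :=
  ∑ i, pd (pd f i) i x

/-- Euclidean norm of a vector in `ℝ³`. -/
noncomputable def enorm3 (g : Fin 3 → ℝ) : ℝ := Real.sqrt (∑ i, g i ^ 2)

/-- `n` is a unit outward-pointing normal field on the boundary of `Ω`. -/
def IsOutwardNormal (Ω : Set (Fin 3 → ℝ)) (n : (Fin 3 → ℝ) → (Fin 3 → ℝ)) : Prop :=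
  ∀ x ∈ frontier Ω, enorm3 (n x) = 1 ∧
    ∃ ε > 0, ∀ t ∈ Set.Ioo (0:ℝ) ε, x + t • n x ∉ closure Ω ∧ x - t • n x ∈ Ω

/-!
Weak maximum principle with an exponential barrier. Write the equation as `w · ∇T = k ΔT` with
the continuous drift `w = ρ Cₚ u`, and choose `l > 0` with `w 0 < k l` on `Ω`. For `ε > 0` the
perturbation `T + B`, `B x = ε exp (l * x 0)`, attains its maximum over the compact `closure Ω`.
Not in `Ω`: there its gradient would vanish and its Laplacian be nonpositive, so the equation
would give `-l (w 0) B = k ΔT ≤ -k l² B`, contradicting `w 0 < k l`. Hence the maximum lies on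
some `Γ i`, where the derivative along the inward normal is nonpositive; with the Robin condition
this gives `T ≤ c i + O(ε)` there, hence everywhere, and `ε → 0` gives `T ≤ max c`. The lower
bound is the upper bound for `-T`.
-/

open Filter Topology

theorem IsLocalMax.deriv_deriv_nonpos {f : ℝ → ℝ} {a : ℝ} (h : IsLocalMax f a)
    (hc : ContinuousAt f a) : deriv (deriv f) a ≤ 0 := by
  by_contra! hpos
  have hconst : f =ᶠ[𝓝 a] fun _ => f a :=
    (h.and (isLocalMin_of_deriv_deriv_pos hpos h.deriv_eq_zero hc)).mono
      fun x hx => le_antisymm hx.1 hx.2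
  have hderiv : deriv f =ᶠ[𝓝 a] fun _ => 0 :=
    hconst.eventuallyEq_nhds.mono fun x hx => by rw [hx.deriv_eq, deriv_const]
  rw [hderiv.deriv_eq, deriv_const] at hpos
  exact hpos.false

theorem IsLocalMax.fderiv_fderiv_apply_nonpos {E : Type*} [NormedAddCommGroup E]
    [NormedSpace ℝ E] {f : E → ℝ} {a : E} (v : E) (h : IsLocalMax f a)
    (hf : ∀ᶠ x in 𝓝 a, DifferentiableAt ℝ f x)
    (hf' : DifferentiableAt ℝ (fun x => fderiv ℝ f x v) a) :
    fderiv ℝ (fun x => fderiv ℝ f x v) a v ≤ 0 := by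
  set line : ℝ → E := fun t => a + t • v
  have hline : ∀ t, HasDerivAt line v t := fun t => by
    simpa only [id, one_smul] using ((hasDerivAt_id t).smul_const v).const_add a
  have hline0 : line 0 = a := by simp [line]
  rw [← hline0] at h hf hf' ⊢
  have hderiv : deriv (f ∘ line) =ᶠ[𝓝 0] (fun x => fderiv ℝ f x v) ∘ line := by
    filter_upwards [(hline 0).continuousAt.eventually hf] with t ht
    exact (ht.hasFDerivAt.comp_hasDerivAt t (hline t)).deriv
  have := (h.comp_continuous (hline 0).continuousAt).deriv_deriv_nonpos
    (hf.self_of_nhds.continuousAt.comp (hline 0).continuousAt)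
  rwa [hderiv.deriv_eq, (hf'.hasFDerivAt.comp_hasDerivAt 0 (hline 0)).deriv] at this

section PartialDerivatives

variable {f g : (Fin 3 → ℝ) → ℝ} {x : Fin 3 → ℝ}

theorem sum_mul_pd (f : (Fin 3 → ℝ) → ℝ) (v x : Fin 3 → ℝ) :
    ∑ j, v j * pd f j x = fderiv ℝ f x v := by
  conv_rhs => rw [← Finset.univ_sum_single v, map_sum]
  refine Finset.sum_congr rfl fun j _ => ?_
  rw [pd, ← smul_eq_mul, ← map_smul, ← Pi.single_smul, smul_eq_mul, mul_one]

theorem pd_neg (f : (Fin 3 → ℝ) → ℝ) (j : Fin 3) (x : Fin 3 → ℝ) :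
    pd (fun y => -f y) j x = -pd f j x := by
  simp [pd, fderiv_fun_neg]

theorem lap_neg (f : (Fin 3 → ℝ) → ℝ) (x : Fin 3 → ℝ) :
    lap (fun y => -f y) x = -lap f x := by
  simp only [lap, funext (pd_neg f _), pd_neg, Finset.sum_neg_distrib]

theorem pd_add (hf : DifferentiableAt ℝ f x) (hg : DifferentiableAt ℝ g x) (j : Fin 3) :
    pd (f + g) j x = pd f j x + pd g j x := by
  simp [pd, fderiv_add hf hg]

theorem ContDiffAt.differentiableAt_pd (hf : ContDiffAt ℝ 2 f x) (j : Fin 3) :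
    DifferentiableAt ℝ (pd f j) x :=
  ((hf.fderiv_right (m := 1) (by norm_num)).differentiableAt one_ne_zero).clm_apply
    (differentiableAt_const _)

theorem ContDiffAt.eventually_differentiableAt (hf : ContDiffAt ℝ 2 f x) :
    ∀ᶠ y in 𝓝 x, DifferentiableAt ℝ f y :=
  (hf.eventually (by simp)).mono fun _ hy => hy.differentiableAt two_ne_zero

theorem lap_add (hf : ContDiffAt ℝ 2 f x) (hg : ContDiffAt ℝ 2 g x) :
    lap (f + g) x = lap f x + lap g x := by
  have hpd : ∀ j, pd (f + g) j =ᶠ[𝓝 x] pd f j + pd g j := fun j => by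
    filter_upwards [hf.eventually_differentiableAt, hg.eventually_differentiableAt]
      with y hfy hgy using pd_add hfy hgy j
  simp only [lap, ← Finset.sum_add_distrib]
  refine Finset.sum_congr rfl fun j _ => ?_
  rw [pd, (hpd j).fderiv_eq, ← pd,
    pd_add (hf.differentiableAt_pd j) (hg.differentiableAt_pd j)]

theorem IsLocalMax.lap_nonpos (h : IsLocalMax f x) (hf : ContDiffAt ℝ 2 f x) :
    lap f x ≤ 0 :=
  Finset.sum_nonpos fun j _ => h.fderiv_fderiv_apply_nonpos _
    hf.eventually_differentiableAt (hf.differentiableAt_pd j)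

end PartialDerivatives

noncomputable def expBarrier (ε l : ℝ) (x : Fin 3 → ℝ) : ℝ := ε * exp (l * x 0)

section ExpBarrier

variable {ε l : ℝ}

theorem contDiff_expBarrier (ε l : ℝ) : ContDiff ℝ 2 (expBarrier ε l) := by
  unfold expBarrier; fun_prop

theorem expBarrier_pos (hε : 0 < ε) (x : Fin 3 → ℝ) : 0 < expBarrier ε l x :=
  mul_pos hε (exp_pos _)

theorem fderiv_expBarrier_apply (ε l : ℝ) (x v : Fin 3 → ℝ) :
    fderiv ℝ (expBarrier ε l) x v = l * v 0 * expBarrier ε l x := by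
  have h : HasFDerivAt (expBarrier ε l)
      (ε • (exp (l * x 0) • (l • ContinuousLinearMap.proj (0 : Fin 3)))) x :=
    (((hasFDerivAt_apply 0 x).const_mul l).exp).const_mul ε
  simp only [h.fderiv, smul_apply, ContinuousLinearMap.proj_apply, smul_eq_mul, expBarrier]
  ring

theorem pd_expBarrier (ε l : ℝ) (j : Fin 3) :
    pd (expBarrier ε l) j = expBarrier (l * (Pi.single j 1 : Fin 3 → ℝ) 0 * ε) l := by
  ext x
  rw [pd, fderiv_expBarrier_apply, expBarrier, expBarrier]
  ring

theorem lap_expBarrier (ε l : ℝ) (x : Fin 3 → ℝ) :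
    lap (expBarrier ε l) x = l ^ 2 * expBarrier ε l x := by
  simp only [lap, pd_expBarrier, expBarrier, Fin.sum_univ_three, Pi.single_eq_same,
    Pi.single_eq_of_ne (by decide : (0 : Fin 3) ≠ 1),
    Pi.single_eq_of_ne (by decide : (0 : Fin 3) ≠ 2)]
  ring

end ExpBarrier

theorem apply_le_enorm3 (v : Fin 3 → ℝ) (i : Fin 3) : v i ≤ enorm3 v :=
  (le_abs_self _).trans <| Real.abs_le_sqrt <|
    Finset.single_le_sum (fun j _ => sq_nonneg (v j)) (Finset.mem_univ i)

section MaximumPrinciple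

variable {Ω : Set (Fin 3 → ℝ)} {T : (Fin 3 → ℝ) → ℝ} {k ε l : ℝ}

theorem not_isLocalMax_add_expBarrier {w x : Fin 3 → ℝ} (hT : ContDiffAt ℝ 2 T x)
    (hk : 0 < k) (hε : 0 < ε) (hl : 0 < l) (hw : w 0 < k * l)
    (heq : ∑ j, w j * pd T j x = k * lap T x) :
    ¬IsLocalMax (T + expBarrier ε l) x := by
  intro hmax
  have hB : ContDiffAt ℝ 2 (expBarrier ε l) x := (contDiff_expBarrier ε l).contDiffAt
  have hgrad : fderiv ℝ T x = -fderiv ℝ (expBarrier ε l) x := by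
    rw [eq_neg_iff_add_eq_zero, ← fderiv_add (hT.differentiableAt two_ne_zero)
      (hB.differentiableAt two_ne_zero)]
    exact hmax.fderiv_eq_zero
  have hlap : lap T x + l ^ 2 * expBarrier ε l x ≤ 0 := by
    rw [← lap_expBarrier, ← lap_add hT hB]
    exact hmax.lap_nonpos (hT.add hB)
  rw [sum_mul_pd, hgrad, neg_apply, fderiv_expBarrier_apply] at heq
  nlinarith [mul_le_mul_of_nonneg_left hlap hk.le,
    mul_pos (mul_pos hl (expBarrier_pos (l := l) hε x)) (sub_pos.2 hw)]

theorem neg_fderiv_normal_le_of_isMaxOn {n : (Fin 3 → ℝ) → (Fin 3 → ℝ)}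
    (hn : IsOutwardNormal Ω n) {x : Fin 3 → ℝ} (hx : x ∈ frontier Ω) (hε : 0 < ε) (hl : 0 < l)
    (hmax : IsMaxOn (T + expBarrier ε l) (closure Ω) x) :
    -fderiv ℝ T x (n x) ≤ l * expBarrier ε l x := by
  obtain ⟨hnorm, δ, hδ, hinside⟩ := hn x hx
  have hB := expBarrier_pos (l := l) hε x
  by_cases hT : DifferentiableAt ℝ T x
  · have hcone : -n x ∈ posTangentConeAt (closure Ω) x := by
      refine mem_posTangentConeAt_of_frequently_mem (Eventually.frequently ?_)
      filter_upwards [Ioo_mem_nhdsGT hδ] with t ht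
      rw [smul_neg, ← sub_eq_add_neg]
      exact subset_closure (hinside t ht).2
    have hderiv := hmax.localize.hasFDerivWithinAt_nonpos
      (hT.hasFDerivAt.add ((contDiff_expBarrier ε l).differentiable two_ne_zero x).hasFDerivAt
        |>.hasFDerivWithinAt) hcone
    rw [map_neg, add_apply, fderiv_expBarrier_apply] at hderiv
    have hn0 : n x 0 ≤ 1 := hnorm ▸ apply_le_enorm3 (n x) 0
    nlinarith [mul_le_mul_of_nonneg_left hn0 (mul_pos hl hB).le]
  · rw [fderiv_zero_of_not_differentiableAt hT, zero_apply, neg_zero]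
    positivity

variable {N : ℕ} {Γ : Fin N → Set (Fin 3 → ℝ)} {h c : Fin N → ℝ} {b : ℝ}
  {n : (Fin 3 → ℝ) → (Fin 3 → ℝ)} {w : (Fin 3 → ℝ) → (Fin 3 → ℝ)}

theorem le_of_isMaxOn_add_expBarrier (hΩo : IsOpen Ω) (hcover : (⋃ i, Γ i) = frontier Ω)
    (hk : 0 < k) (hh : ∀ i, 0 < h i) (hn : IsOutwardNormal Ω n) (hT : ContDiffOn ℝ 2 T Ω)
    (hw : ∀ x ∈ Ω, w x 0 < k * l)
    (heq : ∀ x ∈ Ω, ∑ j, w x j * pd T j x = k * lap T x)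
    (hRobin : ∀ i, ∀ x ∈ Γ i, -(k * ∑ j, n x j * pd T j x) = h i * (T x - c i))
    (hb : ∀ i, c i ≤ b) (hε : 0 < ε) (hl : 0 < l) {x : Fin 3 → ℝ} (hx : x ∈ closure Ω)
    (hmax : IsMaxOn (T + expBarrier ε l) (closure Ω) x) :
    T x ≤ b + (∑ i, k * l / h i) * expBarrier ε l x := by
  have hxΩ : x ∉ Ω := fun hxΩ =>
    not_isLocalMax_add_expBarrier (hT.contDiffAt (hΩo.mem_nhds hxΩ)) hk hε hl (hw x hxΩ)
      (heq x hxΩ) (hmax.isLocalMax (mem_of_superset (hΩo.mem_nhds hxΩ) subset_closure))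
  have hxF : x ∈ frontier Ω := ⟨hx, by rwa [hΩo.interior_eq]⟩
  obtain ⟨i, hxi⟩ := mem_iUnion.1 (hcover ▸ hxF)
  have hrobin := hRobin i x hxi
  rw [sum_mul_pd] at hrobin
  have hflux := neg_fderiv_normal_le_of_isMaxOn hn hxF hε hl hmax
  have hTx : T x - c i ≤ k * l / h i * expBarrier ε l x := by
    rw [div_mul_eq_mul_div, le_div_iff₀ (hh i)]
    nlinarith [mul_le_mul_of_nonneg_left hflux hk.le]
  have hsum : k * l / h i ≤ ∑ j, k * l / h j :=
    Finset.single_le_sum (f := fun j => k * l / h j)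
      (fun j _ => div_nonneg (mul_pos hk hl).le (hh j).le) (Finset.mem_univ i)
  nlinarith [hb i, expBarrier_pos (l := l) hε x]

theorem robin_maximum_principle (hΩo : IsOpen Ω) (hΩb : Bornology.IsBounded Ω)
    (hcover : (⋃ i, Γ i) = frontier Ω) (hk : 0 < k) (hh : ∀ i, 0 < h i)
    (hn : IsOutwardNormal Ω n) (hw : ContinuousOn w (closure Ω)) (hT : ContDiffOn ℝ 2 T Ω)
    (hTc : ContinuousOn T (closure Ω))
    (heq : ∀ x ∈ Ω, ∑ j, w x j * pd T j x = k * lap T x)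
    (hRobin : ∀ i, ∀ x ∈ Γ i, -(k * ∑ j, n x j * pd T j x) = h i * (T x - c i))
    (hb : ∀ i, c i ≤ b) :
    ∀ x ∈ closure Ω, T x ≤ b := by
  intro y hy
  have hK : IsCompact (closure Ω) := hΩb.isCompact_closure
  obtain ⟨M, hM⟩ := hK.exists_bound_of_continuousOn hw
  set l := (|M| + 1) / k
  have hl : 0 < l := by positivity
  have hwl : ∀ x ∈ Ω, w x 0 < k * l := fun x hx =>
    calc w x 0 ≤ ‖w x‖ := (le_abs_self _).trans (norm_le_pi_norm (w x) 0)
      _ ≤ |M| := (hM x (subset_closure hx)).trans (le_abs_self M)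
      _ < k * l := by rw [mul_div_cancel₀ _ hk.ne']; linarith
  obtain ⟨x₁, -, hx₁⟩ := hK.exists_isMaxOn ⟨y, hy⟩
    (by fun_prop : Continuous fun x : Fin 3 → ℝ => exp (l * x 0)).continuousOn
  have hC : 0 ≤ ∑ i, k * l / h i + 1 :=
    add_nonneg (Finset.sum_nonneg fun i _ => div_nonneg (mul_pos hk hl).le (hh i).le) zero_le_one
  set K := (∑ i, k * l / h i + 1) * exp (l * x₁ 0)
  have hK0 : 0 ≤ K := mul_nonneg hC (exp_pos _).le
  have hbound : ∀ ε > 0, T y ≤ b + ε * K := fun ε hε => by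
    obtain ⟨x₀, hx₀, hmax⟩ := hK.exists_isMaxOn ⟨y, hy⟩
      (hTc.add (contDiff_expBarrier ε l).continuous.continuousOn)
    have hT₀ := le_of_isMaxOn_add_expBarrier hΩo hcover hk hh hn hT hwl heq hRobin hb hε hl hx₀
      hmax
    have hy₀ : T y + expBarrier ε l y ≤ T x₀ + expBarrier ε l x₀ := hmax hy
    have hB₀ : expBarrier ε l x₀ ≤ ε * exp (l * x₁ 0) :=
      mul_le_mul_of_nonneg_left (hx₁ hx₀) hε.le
    nlinarith [expBarrier_pos (l := l) hε y, mul_le_mul_of_nonneg_left hB₀ hC]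
  refine le_of_forall_pos_le_add fun δ hδ =>
    (hbound (δ / (K + 1)) (div_pos hδ (by positivity))).trans ?_
  rw [add_le_add_iff_left, div_mul_eq_mul_div, div_le_iff₀ (by positivity)]
  nlinarith

theorem robin_minimum_principle (hΩo : IsOpen Ω) (hΩb : Bornology.IsBounded Ω)
    (hcover : (⋃ i, Γ i) = frontier Ω) (hk : 0 < k) (hh : ∀ i, 0 < h i)
    (hn : IsOutwardNormal Ω n) (hw : ContinuousOn w (closure Ω)) (hT : ContDiffOn ℝ 2 T Ω)
    (hTc : ContinuousOn T (closure Ω))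
    (heq : ∀ x ∈ Ω, ∑ j, w x j * pd T j x = k * lap T x)
    (hRobin : ∀ i, ∀ x ∈ Γ i, -(k * ∑ j, n x j * pd T j x) = h i * (T x - c i))
    (hb : ∀ i, b ≤ c i) :
    ∀ x ∈ closure Ω, b ≤ T x := by
  intro x hx
  refine neg_le_neg_iff.1 <| robin_maximum_principle (T := fun y => -T y) (c := fun i => -c i)
    hΩo hΩb hcover hk hh hn hw hT.neg hTc.neg (fun y hy => ?_) (fun i y hy => ?_)
    (fun i => neg_le_neg (hb i)) x hx
  · simp only [pd_neg, lap_neg, mul_neg, Finset.sum_neg_distrib, heq y hy]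
  · simp only [pd_neg, mul_neg, Finset.sum_neg_distrib]
    linarith [hRobin i y hy]

end MaximumPrinciple

theorem stmt_12_general (Ω : Set (Fin 3 → ℝ)) (hΩo : IsOpen Ω) (hΩb : Bornology.IsBounded Ω)
    (N : ℕ) (Γ : Fin N → Set (Fin 3 → ℝ))
    (hcover : (⋃ i, Γ i) = frontier Ω)
    (ρ Cp k : ℝ) (hk : 0 < k)
    (h c : Fin N → ℝ) (hh : ∀ i, 0 < h i)
    (n : (Fin 3 → ℝ) → (Fin 3 → ℝ)) (hn : IsOutwardNormal Ω n)
    (u : (Fin 3 → ℝ) → (Fin 3 → ℝ)) (hu : ContDiff ℝ 1 u)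
    (T : (Fin 3 → ℝ) → ℝ) (hT : ContDiffOn ℝ 2 T Ω) (hT1 : ContDiffOn ℝ 1 T (closure Ω))
    (heq : ∀ x ∈ Ω, ρ * Cp * (∑ j, u x j * pd T j x) - k * lap T x = 0)
    (hRobin : ∀ i, ∀ x ∈ Γ i, -(k * ∑ j, n x j * pd T j x) = h i * (T x - c i)) :
    ∀ x ∈ closure Ω, (⨅ i, c i) ≤ T x ∧ T x ≤ ⨆ i, c i := by
  have hw : ContinuousOn (fun y => (ρ * Cp) • u y) (closure Ω) :=
    (hu.continuous.const_smul (ρ * Cp)).continuousOn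
  have hdrift : ∀ y ∈ Ω, ∑ j, ((ρ * Cp) • u y) j * pd T j y = k * lap T y := fun y hy => by
    simp only [Pi.smul_apply, smul_eq_mul, mul_assoc, ← Finset.mul_sum]
    linarith [heq y hy]
  intro x hx
  exact ⟨robin_minimum_principle hΩo hΩb hcover hk hh hn hw hT hT1.continuousOn hdrift hRobin
      (fun i => ciInf_le (finite_range c).bddBelow i) x hx,
    robin_maximum_principle hΩo hΩb hcover hk hh hn hw hT hT1.continuousOn hdrift hRobin
      (fun i => le_ciSup (finite_range c).bddAbove i) x hx⟩

/-- comparison principle for the coupled heat-flow model with Robin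
boundary conditions towards reference temperatures c i. -/
theorem stmt_12 (Ω : Set (Fin 3 → ℝ)) (hΩo : IsOpen Ω) (hΩb : Bornology.IsBounded Ω)
    (N : ℕ) [NeZero N] (Γ : Fin N → Set (Fin 3 → ℝ))
    (hcover : (⋃ i, Γ i) = frontier Ω)
    (hdisj : ∀ i j, i ≠ j → Disjoint (Γ i) (Γ j))
    (ρ Cp k : ℝ) (hρ : 0 < ρ) (hCp : 0 < Cp) (hk : 0 < k)
    (h c : Fin N → ℝ) (hh : ∀ i, 0 < h i)
    (n : (Fin 3 → ℝ) → (Fin 3 → ℝ)) (hn : IsOutwardNormal Ω n)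
    (u : (Fin 3 → ℝ) → (Fin 3 → ℝ)) (hu : ContDiff ℝ 1 u)
    (hdiv : ∀ x ∈ Ω, vdiv u x = 0) (hbc : ∀ x ∈ frontier Ω, u x = 0)
    (T : (Fin 3 → ℝ) → ℝ) (hT : ContDiffOn ℝ 2 T Ω) (hT1 : ContDiffOn ℝ 1 T (closure Ω))
    (heq : ∀ x ∈ Ω, ρ * Cp * (∑ j, u x j * pd T j x) - k * lap T x = 0)
    (hRobin : ∀ i, ∀ x ∈ Γ i, -(k * ∑ j, n x j * pd T j x) = h i * (T x - c i)) :
    ∀ x ∈ closure Ω, (⨅ i, c i) ≤ T x ∧ T x ≤ ⨆ i, c i :=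
  stmt_12_general Ω hΩo hΩb N Γ hcover ρ Cp k hk h c hh n hn u hu T hT hT1 heq hRobin
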